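/- arXiv:2202.09260 — 3 statements merged into one kernel-verified Lean document; each statement's English description precedes it below -/
import Mathlib

section
/- Let a : ℝ → ℝ be Lipschitz and (λ,Λ)-elliptic. Define φ(x) = ∫₀ˣ a(y)^{-1} dy. Then: (i) φ is a C¹-diffeomorphism of ℝ onto ℝ; (ii) χ(t,x) := φ^{-1}(t + φ(x)) is C¹ on ℝ² and satisfies the group law χ(t+s,x) = χ(t,χ(s,x)); (iii) for every f ∈ C_c^∞(ℝ), the function u(t,x) = f(χ(t,x)) satisfies ∂ₜu(t,x) = a(x)∂ₓu(t,x) for all (t,x) ∈ ℝ² and u(0,·) = f; and (iv) for every p ∈ [1,∞) and t ∈ ℝ, ‖u(t,·)‖_{L^p(ℝ)} ≤ (Λ/λ)^{1/p} ‖f‖_{L^p(ℝ)}. -/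
open MeasureTheory Real Set Filter
open scoped FourierTransform ENNReal NNReal

noncomputable section

/-- Euclidean space `ℝ^d`. -/
abbrev Euc (d : ℕ) : Type := EuclideanSpace ℝ (Fin d)

/-- The homogeneous Lipschitz seminorm `‖a‖_{Ċ⁰ᐟ¹} = sup_{x ≠ y} |a x - a y| / |x - y|`. -/
def lipNorm (a : ℝ → ℝ) : ℝ :=
  ⨆ pr : ℝ × ℝ, if pr.1 = pr.2 then 0 else |a pr.1 - a pr.2| / |pr.1 - pr.2|

/-- `(λ,Λ)`-ellipticity of a coefficient: `λ ≤ a x ≤ Λ` for all `x`. -/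
def Elliptic (lam Lam : ℝ) (a : ℝ → ℝ) : Prop :=
  ∀ x : ℝ, lam ≤ a x ∧ a x ≤ Lam

/-- `a` is a Lipschitz function. -/
def IsLip (a : ℝ → ℝ) : Prop := ∃ K : ℝ≥0, LipschitzWith K a

/-- Weak (distributional) partial derivative in the `j`-th coordinate direction:
`g = ∂_j f` tested against Schwartz functions. -/
def HasWeakPartial {d : ℕ} (j : Fin d) (f g : Euc d → ℂ) : Prop :=
  ∀ φ : SchwartzMap (Euc d) ℂ,
    ∫ x : Euc d, f x * fderiv ℝ (⇑φ) x (EuclideanSpace.single j 1)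
      = - ∫ x : Euc d, g x * φ x

/-- Mixed space-time norm `‖u‖_{L^p(I, L^q(ℝ^d))}`. -/
def mixedNorm {d : ℕ} {α : Type*} [NormedAddCommGroup α] (p q : ℝ≥0∞) (I : Set ℝ)
    (u : ℝ → Euc d → α) : ℝ≥0∞ :=
  eLpNorm (fun t => (eLpNorm (u t) q volume).toReal) p (volume.restrict I)

/-- Sobolev norm `‖f‖_{H^s} = ‖(1+|ξ|²)^{s/2} 𝓕 f‖_{L²}`. -/
def sobolevNorm {d : ℕ} (s : ℝ) (f : Euc d → ℂ) : ℝ≥0∞ :=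
  eLpNorm (fun ξ : Euc d => ((1 + ‖ξ‖ ^ 2) ^ (s / 2) : ℝ) • 𝓕 f ξ) 2 volume

/-- The Fourier multiplier `|D|^σ` with symbol `|ξ|^σ`. -/
def absD {d : ℕ} (σ : ℝ) (f : Euc d → ℂ) : Euc d → ℂ :=
  𝓕⁻ fun ξ : Euc d => (‖ξ‖ ^ σ : ℝ) • 𝓕 f ξ

/-- The Fourier multiplier `⟨D⟩^σ` with symbol `(1+|ξ|²)^{σ/2}`. -/
def japD {d : ℕ} (σ : ℝ) (f : Euc d → ℂ) : Euc d → ℂ :=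
  𝓕⁻ fun ξ : Euc d => ((1 + ‖ξ‖ ^ 2) ^ (σ / 2) : ℝ) • 𝓕 f ξ

/-- `t ↦ u(t)` is differentiable in the `L²(ℝ^d)` sense on `I`, with derivative `ut`. -/
def HasL2DerivOn {d : ℕ} (I : Set ℝ) (u ut : ℝ → Euc d → ℂ) : Prop :=
  ∀ t ∈ I, Tendsto
    (fun h : ℝ =>
      eLpNorm (fun x : Euc d => (u (t + h) x - u t x) / (h : ℂ) - ut t x) 2 volume)
    (nhdsWithin 0 ({h : ℝ | t + h ∈ I} \ {0})) (nhds 0)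

/-- `t ↦ u(t)` is continuous in the `L²(ℝ^d)` sense on `I`. -/
def L2ContinuousOn {d : ℕ} (I : Set ℝ) (u : ℝ → Euc d → ℂ) : Prop :=
  ∀ t ∈ I, Tendsto (fun s : ℝ => eLpNorm (fun x : Euc d => u s x - u t x) 2 volume)
    (nhdsWithin t I) (nhds 0)

/-- `w = -∑ⱼ bⱼ(xⱼ) ∂ⱼ(aⱼ(xⱼ) ∂ⱼ f)` in the weak sense, with all intermediate
derivatives in `L²` (encoding `f ∈ H²` for elliptic Lipschitz coefficients). -/
def IsStructuredLApp {d : ℕ} (a b : Fin d → ℝ → ℝ) (f w : Euc d → ℂ) : Prop :=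
  MemLp f 2 volume ∧
  ∃ g h : Fin d → Euc d → ℂ,
    (∀ j, HasWeakPartial j f (g j)) ∧ (∀ j, MemLp (g j) 2 volume) ∧
    (∀ j, HasWeakPartial j (fun x => (a j (x j) : ℂ) * g j x) (h j)) ∧
    (∀ j, MemLp (h j) 2 volume) ∧
    (∀ x, w x = - ∑ j, (b j (x j) : ℂ) * h j x)

/-- One-dimensional weak derivative tested against Schwartz functions. -/
def HasWeakDeriv1 (f g : ℝ → ℂ) : Prop :=
  ∀ φ : SchwartzMap ℝ ℂ, ∫ x : ℝ, f x * deriv (⇑φ) x = - ∫ x : ℝ, g x * φ x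

/-- One-dimensional differentiability in the `L²(ℝ)` sense on `I`. -/
def HasL2DerivOn1 (I : Set ℝ) (u ut : ℝ → ℝ → ℂ) : Prop :=
  ∀ t ∈ I, Tendsto
    (fun h : ℝ =>
      eLpNorm (fun x : ℝ => (u (t + h) x - u t x) / (h : ℂ) - ut t x) 2 volume)
    (nhdsWithin 0 ({h : ℝ | t + h ∈ I} \ {0})) (nhds 0)

/-- One-dimensional continuity in the `L²(ℝ)` sense on `I`. -/
def L2ContinuousOn1 (I : Set ℝ) (u : ℝ → ℝ → ℂ) : Prop :=
  ∀ t ∈ I, Tendsto (fun s : ℝ => eLpNorm (fun x : ℝ => u s x - u t x) 2 volume)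
    (nhdsWithin t I) (nhds 0)

/-- `(u₁,u₂)` solves the 1-d Dirac system `∂ₜu₁ = -i b ∂ₓ u₂`, `∂ₜu₂ = i a ∂ₓ u₁`
on the time set `I`, in the class `C¹(I,L²(ℝ;ℂ²)) ∩ C(I,H¹(ℝ;ℂ²))`. -/
def IsDiracSolutionOn (a b : ℝ → ℝ) (I : Set ℝ) (u₁ u₂ : ℝ → ℝ → ℂ) : Prop :=
  ∃ ut₁ ut₂ g₁ g₂ : ℝ → ℝ → ℂ,
    HasL2DerivOn1 I u₁ ut₁ ∧ HasL2DerivOn1 I u₂ ut₂ ∧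
    L2ContinuousOn1 I ut₁ ∧ L2ContinuousOn1 I ut₂ ∧
    L2ContinuousOn1 I g₁ ∧ L2ContinuousOn1 I g₂ ∧
    (∀ t ∈ I, MemLp (u₁ t) 2 volume ∧ MemLp (u₂ t) 2 volume ∧
      MemLp (g₁ t) 2 volume ∧ MemLp (g₂ t) 2 volume) ∧
    (∀ t ∈ I, HasWeakDeriv1 (u₁ t) (g₁ t) ∧ HasWeakDeriv1 (u₂ t) (g₂ t)) ∧
    (∀ t ∈ I, (∀ᵐ x : ℝ, ut₁ t x = - Complex.I * (b x : ℂ) * g₂ t x) ∧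
              (∀ᵐ x : ℝ, ut₂ t x = Complex.I * (a x : ℂ) * g₁ t x))

/-- Classical partial derivative `∂_j f` on `ℝ^d`. -/
def pderivE {d : ℕ} (j : Fin d) (f : Euc d → ℂ) : Euc d → ℂ :=
  fun x => fderiv ℝ f x (EuclideanSpace.single j 1)

/-- `f` belongs to the Schwartz class `𝒮(ℝ^d)`. -/
def IsSchwartzFn {d : ℕ} (f : Euc d → ℂ) : Prop :=
  ContDiff ℝ (⊤ : ℕ∞) f ∧ ∀ k n : ℕ, ∃ C : ℝ, ∀ x : Euc d, ‖x‖ ^ k * ‖iteratedFDeriv ℝ n f x‖ ≤ C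

/-- The wave operator `P u = ∂ₜ²u - ∑ᵢ ∂_{xᵢ}(aᵢ(xᵢ) ∂_{xᵢ} u)` (classical derivatives). -/
def waveOp {d : ℕ} (a : Fin d → ℝ → ℝ) (u : ℝ → Euc d → ℂ) : ℝ → Euc d → ℂ :=
  fun t x => deriv (fun s => deriv (fun r => u r x) s) t
    - ∑ j, pderivE j (fun y => (a j (y j) : ℂ) * pderivE j (u t) y) x

/-- A radial smooth cutoff `φ`, identically `1` on the unit ball and supported in the
ball of radius `2`. -/
def IsLPCutoff {E : Type*} [NormedAddCommGroup E] [NormedSpace ℝ E] (φ : E → ℝ) : Prop :=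
  ContDiff ℝ (⊤ : ℕ∞) φ ∧ HasCompactSupport φ ∧ (∀ x, ‖x‖ ≤ 1 → φ x = 1) ∧
    (∀ x, 2 < ‖x‖ → φ x = 0) ∧ ∀ x y, ‖x‖ = ‖y‖ → φ x = φ y

/-- Inhomogeneous Littlewood–Paley projection `S_N` with `N = 2^k`:
`S_1 f = 𝓕⁻¹(φ 𝓕f)` and, for `k ≥ 1`, `S_{2^k} f = 𝓕⁻¹(ψ(·/2^k) 𝓕f)` where
`ψ(ξ) = φ(ξ/2) - φ(ξ)`. -/
def lpProj {d : ℕ} (φ : Euc d → ℝ) (k : ℕ) (f : Euc d → ℂ) : Euc d → ℂ :=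
  if k = 0 then 𝓕⁻ fun ξ => (φ ξ : ℂ) * 𝓕 f ξ
  else 𝓕⁻ fun ξ => ((φ (((2:ℝ) ^ (k+1))⁻¹ • ξ) - φ (((2:ℝ) ^ k)⁻¹ • ξ) : ℝ) : ℂ) * 𝓕 f ξ

/-- The Littlewood–Paley piece `𝓕⁻¹(ψ(·/2^k) 𝓕a)` of a bounded function `a : ℝ → ℝ`,
realised as convolution with the dilated kernel `2^k ψ̌(2^k ·)`, `ψ(ξ)=φ₁(ξ/2)-φ₁(ξ)`. -/
def besovPiece (φ1 : ℝ → ℝ) (k : ℤ) (a : ℝ → ℝ) : ℝ → ℂ :=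
  fun x => ∫ y : ℝ,
    (((2:ℝ) ^ k : ℝ) : ℂ) * (𝓕⁻ fun ξ : ℝ => ((φ1 (ξ / 2) - φ1 ξ : ℝ) : ℂ)) ((2:ℝ) ^ k * (x - y))
      * (a y : ℂ)

/-- Homogeneous Besov norm `‖a‖_{Ḃ^s_{∞,1}(ℝ)} = ∑_{N ∈ 2^ℤ} N^s ‖𝓕⁻¹(ψ(·/N) 𝓕a)‖_{L^∞}`. -/
def besovNorm (s : ℝ) (φ1 : ℝ → ℝ) (a : ℝ → ℝ) : ℝ≥0∞ :=
  ∑' k : ℤ, ENNReal.ofReal (((2:ℝ) ^ k) ^ s) * eLpNorm (besovPiece φ1 k a) ⊤ volume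

/-- The transport group generated by `a d/dx` for a Lipschitz elliptic
coefficient: with `φ(x) = ∫₀ˣ a(y)⁻¹ dy` and `χ(t,x) = φ⁻¹(t + φ(x))`,
(i) `φ` is a `C¹`-diffeomorphism of `ℝ`; (ii) `χ` is `C¹` and satisfies the group law;
(iii) `u(t,x) = f(χ(t,x))` solves `∂ₜu = a ∂ₓu`, `u(0) = f`, for `f ∈ C_c^∞(ℝ)`;
(iv) `‖u(t)‖_{L^p} ≤ (Λ/λ)^{1/p} ‖f‖_{L^p}` for `p ∈ [1,∞)`. -/
theorem transport_group_one_dim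
    (lam Lam : ℝ) (hlam : 0 < lam) (hLL : lam ≤ Lam)
    (a : ℝ → ℝ) (ha : IsLip a) (hell : Elliptic lam Lam a)
    (φ : ℝ → ℝ) (hφ : ∀ x : ℝ, φ x = ∫ y in (0:ℝ)..x, (a y)⁻¹)
    (χ : ℝ → ℝ → ℝ) (hχ : ∀ t x : ℝ, χ t x = Function.invFun φ (t + φ x)) :
    (ContDiff ℝ 1 φ ∧ Function.Bijective φ ∧ ContDiff ℝ 1 (Function.invFun φ))
    ∧ (ContDiff ℝ 1 (fun pr : ℝ × ℝ => χ pr.1 pr.2)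
        ∧ ∀ t s x : ℝ, χ (t + s) x = χ t (χ s x))
    ∧ (∀ f : ℝ → ℂ, ContDiff ℝ (⊤ : ℕ∞) f → HasCompactSupport f →
        ((∀ t x : ℝ,
            deriv (fun r => f (χ r x)) t = (a x : ℂ) * deriv (fun y => f (χ t y)) x)
          ∧ (∀ x : ℝ, f (χ 0 x) = f x))
        ∧ ∀ p : ℝ≥0∞, 1 ≤ p → p < ⊤ → ∀ t : ℝ,
            eLpNorm (fun x => f (χ t x)) p volume
              ≤ ENNReal.ofReal ((Lam / lam) ^ (1 / p).toReal) * eLpNorm f p volume) := by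
  obtain ⟨K, hLip⟩ := ha
  have hca : Continuous a := hLip.continuous
  have hapos : ∀ x, 0 < a x := fun x => lt_of_lt_of_le hlam (hell x).1
  have hane : ∀ x, a x ≠ 0 := fun x => (hapos x).ne'
  have hLam0 : 0 < Lam := lt_of_lt_of_le hlam hLL
  have hcinv : Continuous fun y : ℝ => (a y)⁻¹ := hca.inv₀ hane
  have hφeq : φ = fun x => ∫ y in (0:ℝ)..x, (a y)⁻¹ := funext hφ
  have hφd : ∀ x, HasDerivAt φ (a x)⁻¹ x := by
    intro x
    rw [hφeq]
    exact (hcinv.integral_hasStrictDerivAt 0 x).hasDerivAt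
  have hφdiff : Differentiable ℝ φ := fun x => (hφd x).differentiableAt
  have hderivφ : deriv φ = fun x => (a x)⁻¹ := funext fun x => (hφd x).deriv
  have hφC1 : ContDiff ℝ 1 φ :=
    contDiff_one_iff_deriv.mpr ⟨hφdiff, by rw [hderivφ]; exact hcinv⟩
  have hmono : StrictMono φ := by
    apply strictMono_of_deriv_pos
    rw [hderivφ]
    exact fun x => inv_pos.mpr (hapos x)
  have hlei : ∀ y : ℝ, Lam⁻¹ ≤ (a y)⁻¹ := fun y =>
    inv_anti₀ (hapos y) (hell y).2
  have hub : ∀ x : ℝ, 0 ≤ x → x * Lam⁻¹ ≤ φ x := by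
    intro x hx
    rw [hφ]
    have h1 : ∫ _ in (0:ℝ)..x, Lam⁻¹ ≤ ∫ y in (0:ℝ)..x, (a y)⁻¹ :=
      intervalIntegral.integral_mono_on hx intervalIntegrable_const
        (hcinv.intervalIntegrable 0 x) (fun y _ => hlei y)
    simpa using h1
  have hlb : ∀ x : ℝ, x ≤ 0 → φ x ≤ x * Lam⁻¹ := by
    intro x hx
    rw [hφ, intervalIntegral.integral_symm]
    have h1 : ∫ _ in x..(0:ℝ), Lam⁻¹ ≤ ∫ y in x..(0:ℝ), (a y)⁻¹ :=
      intervalIntegral.integral_mono_on hx intervalIntegrable_const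
        (hcinv.intervalIntegrable x 0) (fun y _ => hlei y)
    simp only [intervalIntegral.integral_const, smul_eq_mul, zero_sub] at h1
    linarith
  have htop : Tendsto φ atTop atTop := by
    refine tendsto_atTop_mono' atTop ?_ (tendsto_id.atTop_mul_const (inv_pos.mpr hLam0))
    filter_upwards [eventually_ge_atTop (0:ℝ)] with x hx using hub x hx
  have hbot : Tendsto φ atBot atBot := by
    refine tendsto_atBot_mono' atBot ?_ (tendsto_id.atBot_mul_const (inv_pos.mpr hLam0))
    filter_upwards [eventually_le_atBot (0:ℝ)] with x hx using hlb x hx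
  have hsurj : Function.Surjective φ := hφC1.continuous.surjective htop hbot
  have hbij : Function.Bijective φ := ⟨hmono.injective, hsurj⟩
  set ψ := Function.invFun φ with hψdef
  have hψφ : ∀ x, ψ (φ x) = x := fun x => Function.leftInverse_invFun hmono.injective x
  have hφψ : ∀ y, φ (ψ y) = y := fun y => Function.rightInverse_invFun hsurj y
  have hψcont : Continuous ψ := by
    have hiso : ψ = ⇑(StrictMono.orderIsoOfSurjective φ hmono hsurj).symm := by
      funext y
      apply hmono.injective
      rw [hφψ]
      exact ((StrictMono.orderIsoOfSurjective φ hmono hsurj).apply_symm_apply y).symm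
    rw [hiso]
    exact OrderIso.continuous _
  have hψd : ∀ y, HasDerivAt ψ (a (ψ y)) y := by
    intro y
    have h := HasDerivAt.of_local_left_inverse hψcont.continuousAt (hφd (ψ y))
      (inv_ne_zero (hane _)) (Filter.Eventually.of_forall hφψ)
    simpa using h
  have hψdiff : Differentiable ℝ ψ := fun y => (hψd y).differentiableAt
  have hderivψ : deriv ψ = fun y => a (ψ y) := funext fun y => (hψd y).deriv
  have hψC1 : ContDiff ℝ 1 ψ :=
    contDiff_one_iff_deriv.mpr ⟨hψdiff, by rw [hderivψ]; exact hca.comp hψcont⟩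
  have hψinj : Function.Injective ψ := Function.LeftInverse.injective hφψ
  have hχ0 : ∀ x, χ 0 x = x := fun x => by rw [hχ, zero_add, hψφ]
  have hχt : ∀ t x : ℝ, HasDerivAt (fun r => χ r x) (a (χ t x)) t := by
    intro t x
    have h1 : HasDerivAt (fun r : ℝ => r + φ x) 1 t := (hasDerivAt_id t).add_const _
    have h2 := (hψd (t + φ x)).comp t h1
    have he : (fun r : ℝ => χ r x) = fun r => ψ (r + φ x) := funext fun r => hχ r x
    rw [he, hχ]
    simpa [Function.comp_def] using h2
  have hχx : ∀ t x : ℝ, HasDerivAt (fun y => χ t y) (a (χ t x) * (a x)⁻¹) x := by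
    intro t x
    have h1 : HasDerivAt (fun y : ℝ => t + φ y) ((a x)⁻¹) x := (hφd x).const_add t
    have h2 := (hψd (t + φ x)).comp x h1
    have he : (fun y : ℝ => χ t y) = fun y => ψ (t + φ y) := funext fun y => hχ t y
    rw [he, hχ]
    simpa [Function.comp_def] using h2
  refine ⟨⟨hφC1, hbij, hψC1⟩, ⟨?_, ?_⟩, ?_⟩
  · have he : (fun pr : ℝ × ℝ => χ pr.1 pr.2) = fun pr : ℝ × ℝ => ψ (pr.1 + φ pr.2) := by
      funext pr; rw [hχ]
    rw [he]
    exact hψC1.comp (contDiff_fst.add (hφC1.comp contDiff_snd))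
  · intro t s x
    rw [hχ, hχ, hχ, hφψ, add_assoc]
  · intro f hf _hfc
    constructor
    · constructor
      · intro t x
        have hfd : ∀ y : ℝ, HasDerivAt f (deriv f y) y := fun y =>
          ((hf.differentiable (by simp)) y).hasDerivAt
        have h1 : HasDerivAt (fun r => f (χ r x)) (a (χ t x) • deriv f (χ t x)) t := by
          have := (hfd (χ t x)).scomp t (hχt t x)
          simpa [Function.comp_def] using this
        have h2 : HasDerivAt (fun y => f (χ t y))
            ((a (χ t x) * (a x)⁻¹) • deriv f (χ t x)) x := by
          have := (hfd (χ t x)).scomp x (hχx t x)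
          simpa [Function.comp_def] using this
        rw [h1.deriv, h2.deriv]
        have hax : (a x : ℂ) ≠ 0 := by exact_mod_cast hane x
        simp only [Complex.real_smul]
        push_cast
        field_simp
      · intro x
        rw [hχ0]
    · intro p hp1 hptop t
      have hp0 : p ≠ 0 := (lt_of_lt_of_le zero_lt_one hp1).ne'
      have hpt : p ≠ ⊤ := hptop.ne
      have hr : 0 < p.toReal := ENNReal.toReal_pos hp0 hpt
      set r : ℝ := p.toReal with hrdef
      set g : ℝ → ℝ≥0∞ := fun y => (‖f y‖₊ : ℝ≥0∞) ^ r with hg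
      have hinj : Function.Injective (fun x => χ t x) := by
        intro x y hxy
        simp only [hχ] at hxy
        have h2 := hψinj hxy
        exact hmono.injective (by linarith)
      have hsurjχ : Function.Surjective (fun x => χ t x) := by
        intro y
        refine ⟨ψ (φ y - t), ?_⟩
        show χ t (ψ (φ y - t)) = y
        rw [hχ, hφψ]
        have : t + (φ y - t) = φ y := by ring
        rw [this, hψφ]
      have hCV := lintegral_image_eq_lintegral_abs_det_fderiv_mul volume MeasurableSet.univ
        (fun x (_ : x ∈ Set.univ) =>
          ((hχx t x).hasDerivWithinAt (s := Set.univ)).hasFDerivWithinAt)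
        (hinj.injOn) g
      simp only [ContinuousLinearMap.det_toSpanSingleton, Set.image_univ, hsurjχ.range_eq,
        Measure.restrict_univ] at hCV
      have hdivpos : (0:ℝ) < lam / Lam := div_pos hlam hLam0
      have hlow : ∀ x : ℝ, ENNReal.ofReal (lam / Lam) * g (χ t x)
          ≤ ENNReal.ofReal |a (χ t x) * (a x)⁻¹| * g (χ t x) := by
        intro x
        have h1 : lam / Lam ≤ a (χ t x) * (a x)⁻¹ := by
          rw [div_eq_mul_inv]
          exact mul_le_mul (hell _).1 (inv_anti₀ (hapos x) (hell x).2)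
            (inv_nonneg.mpr hLam0.le) (hapos _).le
        have h2 : (0:ℝ) ≤ a (χ t x) * (a x)⁻¹ := mul_nonneg (hapos _).le (inv_nonneg.mpr (hapos x).le)
        rw [abs_of_nonneg h2]
        exact mul_le_mul_left (ENNReal.ofReal_le_ofReal h1) _
      have hc0 : ENNReal.ofReal (lam / Lam) ≠ 0 := by
        simp [ENNReal.ofReal_eq_zero, not_le, hdivpos]
      have hct : ENNReal.ofReal (lam / Lam) ≠ ⊤ := ENNReal.ofReal_ne_top
      have h3 : ENNReal.ofReal (lam / Lam) * ∫⁻ x, g (χ t x) ≤ ∫⁻ x, g x := by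
        rw [← lintegral_const_mul' _ _ hct, hCV]
        exact lintegral_mono hlow
      have key : ∫⁻ x, g (χ t x) ≤ ENNReal.ofReal (Lam / lam) * ∫⁻ x, g x := by
        calc ∫⁻ x, g (χ t x)
            = (ENNReal.ofReal (lam / Lam))⁻¹
              * (ENNReal.ofReal (lam / Lam) * ∫⁻ x, g (χ t x)) := by
              rw [← mul_assoc, ENNReal.inv_mul_cancel hc0 hct, one_mul]
          _ ≤ (ENNReal.ofReal (lam / Lam))⁻¹ * ∫⁻ x, g x := mul_le_mul_right h3 _
          _ = ENNReal.ofReal (Lam / lam) * ∫⁻ x, g x := by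
              rw [← ENNReal.ofReal_inv_of_pos hdivpos, inv_div]
      have h1r : (1 / p).toReal = 1 / r := by
        simp [hrdef, one_div, ENNReal.toReal_inv]
      rw [eLpNorm_eq_lintegral_rpow_enorm_toReal hp0 hpt, eLpNorm_eq_lintegral_rpow_enorm_toReal hp0 hpt,
        h1r]
      calc (∫⁻ x, (‖f (χ t x)‖₊ : ℝ≥0∞) ^ r) ^ (1 / r)
          ≤ (ENNReal.ofReal (Lam / lam) * ∫⁻ x, (‖f x‖₊ : ℝ≥0∞) ^ r) ^ (1 / r) :=
            ENNReal.rpow_le_rpow key (by positivity)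
        _ = ENNReal.ofReal ((Lam / lam) ^ (1 / r))
              * (∫⁻ x, (‖f x‖₊ : ℝ≥0∞) ^ r) ^ (1 / r) := by
            rw [ENNReal.mul_rpow_of_nonneg _ _ (by positivity),
              ENNReal.ofReal_rpow_of_pos (div_pos hLam0 hlam)]
end
end

section
/- Let a,b : ℝ → ℝ be Lipschitz and (λ,Λ)-elliptic, and set M(x) = [[b(x)^{1/2}, b(x)^{1/2}],[a(x)^{1/2}, −a(x)^{1/2}]]. Then M(x) is invertible for every x with M^{-1}(x) = (1/2)[[b(x)^{-1/2}, a(x)^{-1/2}],[b(x)^{-1/2}, −a(x)^{-1/2}]], and there exists a measurable matrix-valued function E : ℝ → ℂ^{2×2} with ess sup_x |E(x)| ≤ C(λ,Λ)·max(‖a‖_{Ċ^{0,1}}, ‖b‖_{Ċ^{0,1}}) such that for every u = (u₁,u₂) ∈ C_c^∞(ℝ;ℂ²) and almost every x ∈ ℝ: M^{-1}(x)·( b(x)·(Mu)₂'(x), a(x)·(Mu)₁'(x) )ᵀ = ( (a(x)b(x))^{1/2} u₁'(x), −(a(x)b(x))^{1/2} u₂'(x) )ᵀ + E(x)·u(x),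 where (Mu)₁ = b^{1/2}(u₁+u₂), (Mu)₂ = a^{1/2}(u₁−u₂), and their derivatives are the almost-everywhere derivatives (which exist since these functions are Lipschitz). -/
open MeasureTheory Real Set Filter
open scoped FourierTransform ENNReal NNReal

noncomputable section

open Matrix

/-- The eigenvector matrix `M(x)` of the principal symbol of the Dirac operator. -/
def Mmat (a b : ℝ → ℝ) (x : ℝ) : Matrix (Fin 2) (Fin 2) ℂ :=
  !![(Real.sqrt (b x) : ℂ), (Real.sqrt (b x) : ℂ);
     (Real.sqrt (a x) : ℂ), -(Real.sqrt (a x) : ℂ)]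

/-- The claimed inverse `M⁻¹(x)`. -/
def Mmatinv (a b : ℝ → ℝ) (x : ℝ) : Matrix (Fin 2) (Fin 2) ℂ :=
  (2⁻¹ : ℂ) • !![((Real.sqrt (b x) : ℂ))⁻¹, ((Real.sqrt (a x) : ℂ))⁻¹;
                 ((Real.sqrt (b x) : ℂ))⁻¹, -((Real.sqrt (a x) : ℂ))⁻¹]


section DiracDiagAux

lemma lipNorm_bdd' {a : ℝ → ℝ} {K : ℝ≥0} (h : LipschitzWith K a) :
    ∀ pr : ℝ × ℝ, (if pr.1 = pr.2 then 0 else |a pr.1 - a pr.2| / |pr.1 - pr.2|) ≤ K := by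
  rintro ⟨x, y⟩
  dsimp only
  split_ifs with hxy
  · positivity
  · rw [div_le_iff₀ (abs_pos.mpr (sub_ne_zero.mpr hxy))]
    have := h.dist_le_mul x y
    simpa [Real.dist_eq, mul_comm] using this

lemma lipNorm_nonneg' {a : ℝ → ℝ} (h : IsLip a) : 0 ≤ lipNorm a := by
  obtain ⟨K, hK⟩ := h
  have hb : BddAbove (Set.range fun pr : ℝ × ℝ =>
      if pr.1 = pr.2 then 0 else |a pr.1 - a pr.2| / |pr.1 - pr.2|) :=
    ⟨K, by rintro _ ⟨pr, rfl⟩; exact lipNorm_bdd' hK pr⟩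
  have := le_ciSup hb ((0 : ℝ), (0 : ℝ))
  simpa [lipNorm] using this

lemma abs_sub_le_lipNorm' {a : ℝ → ℝ} (h : IsLip a) (x y : ℝ) :
    |a x - a y| ≤ lipNorm a * |x - y| := by
  obtain ⟨K, hK⟩ := h
  have hb : BddAbove (Set.range fun pr : ℝ × ℝ =>
      if pr.1 = pr.2 then 0 else |a pr.1 - a pr.2| / |pr.1 - pr.2|) :=
    ⟨K, by rintro _ ⟨pr, rfl⟩; exact lipNorm_bdd' hK pr⟩
  rcases eq_or_ne x y with rfl | hxy
  · simp
  · have h1 : |a x - a y| / |x - y| ≤ lipNorm a := by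
      have := le_ciSup hb (x, y)
      simpa [lipNorm, hxy] using this
    rw [div_le_iff₀ (abs_pos.mpr (sub_ne_zero.mpr hxy))] at h1
    linarith [h1]

lemma sqrt_diff_le' {lam s t : ℝ} (hlam : 0 < lam) (hs : lam ≤ s) (ht : lam ≤ t) :
    |Real.sqrt s - Real.sqrt t| ≤ |s - t| / (2 * Real.sqrt lam) := by
  have hl : 0 < Real.sqrt lam := Real.sqrt_pos.mpr hlam
  rw [le_div_iff₀ (by positivity)]
  have hss : Real.sqrt s ^ 2 = s := Real.sq_sqrt (hlam.le.trans hs)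
  have hts : Real.sqrt t ^ 2 = t := Real.sq_sqrt (hlam.le.trans ht)
  have h1 : Real.sqrt lam ≤ Real.sqrt s := Real.sqrt_le_sqrt hs
  have h2 : Real.sqrt lam ≤ Real.sqrt t := Real.sqrt_le_sqrt ht
  have key : |Real.sqrt s - Real.sqrt t| * (Real.sqrt s + Real.sqrt t) = |s - t| := by
    rw [← abs_of_nonneg (show (0:ℝ) ≤ Real.sqrt s + Real.sqrt t by positivity), ← abs_mul]
    congr 1
    nlinarith [hss, hts]
  calc |Real.sqrt s - Real.sqrt t| * (2 * Real.sqrt lam)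
      ≤ |Real.sqrt s - Real.sqrt t| * (Real.sqrt s + Real.sqrt t) := by
        apply mul_le_mul_of_nonneg_left (by linarith) (abs_nonneg _)
    _ = |s - t| := key

lemma sqrt_comp_lipschitz' {lam : ℝ} (hlam : 0 < lam) {a : ℝ → ℝ}
    (ha : IsLip a) (hell : ∀ x, lam ≤ a x) :
    LipschitzWith (lipNorm a / (2 * Real.sqrt lam)).toNNReal (fun y => Real.sqrt (a y)) := by
  apply LipschitzWith.of_dist_le_mul
  intro x y
  rw [Real.dist_eq, Real.dist_eq]
  have h1 := sqrt_diff_le' hlam (hell x) (hell y)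
  have h2 := abs_sub_le_lipNorm' ha x y
  have hl : 0 < Real.sqrt lam := Real.sqrt_pos.mpr hlam
  have h0 : 0 ≤ lipNorm a := lipNorm_nonneg' ha
  rw [Real.coe_toNNReal _ (by positivity)]
  calc |Real.sqrt (a x) - Real.sqrt (a y)| ≤ |a x - a y| / (2 * Real.sqrt lam) := h1
    _ ≤ lipNorm a * |x - y| / (2 * Real.sqrt lam) := by
        exact div_le_div_of_nonneg_right h2 (by positivity) |>.trans_eq rfl
    _ = lipNorm a / (2 * Real.sqrt lam) * |x - y| := by ring

lemma deriv_le_of_lip' {f : ℝ → ℝ} {K : ℝ≥0} (h : LipschitzWith K f) (x : ℝ)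
    (hd : DifferentiableAt ℝ f x) : |deriv f x| ≤ K := by
  have h1 : ‖fderiv ℝ f x‖ ≤ K := hd.hasFDerivAt.le_of_lipschitz h
  calc |deriv f x| = ‖fderiv ℝ f x 1‖ := by rw [← fderiv_apply_one_eq_deriv]; rfl
    _ ≤ ‖fderiv ℝ f x‖ * ‖(1:ℝ)‖ := (fderiv ℝ f x).le_opNorm 1
    _ ≤ K := by simpa using h1

end DiracDiagAux

set_option maxHeartbeats 1000000 in
/-- Diagonalization of the first-order operator
`A = [[0, b∂ₓ],[a∂ₓ, 0]]` by the eigenvector matrix `M`: `M(x)` is invertible with the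
explicit inverse, and conjugation yields the decoupled transport operator
`diag((ab)^{1/2}∂ₓ, -(ab)^{1/2}∂ₓ)` up to a bounded multiplication operator `E` with
`ess sup |E| ≤ C(λ,Λ) max(‖a‖_{Ċ⁰ᐟ¹}, ‖b‖_{Ċ⁰ᐟ¹})`. -/
theorem dirac_diagonalization
    (lam Lam : ℝ) (hlam : 0 < lam) (hLL : lam ≤ Lam) :
    ∃ C : ℝ, 0 < C ∧
      ∀ a b : ℝ → ℝ, IsLip a → IsLip b → Elliptic lam Lam a → Elliptic lam Lam b →
        (∀ x : ℝ, Mmat a b x * Mmatinv a b x = 1 ∧ Mmatinv a b x * Mmat a b x = 1) ∧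
        ∃ E : ℝ → Matrix (Fin 2) (Fin 2) ℂ,
          (∀ i j : Fin 2, Measurable fun x => E x i j) ∧
          (∀ᵐ x : ℝ, ∀ i j : Fin 2, ‖E x i j‖ ≤ C * max (lipNorm a) (lipNorm b)) ∧
          ∀ u₁ u₂ : ℝ → ℂ,
            ContDiff ℝ (⊤ : ℕ∞) u₁ → HasCompactSupport u₁ →
            ContDiff ℝ (⊤ : ℕ∞) u₂ → HasCompactSupport u₂ →
            ∀ᵐ x : ℝ,
              Mmatinv a b x *ᵥ
                  ![(b x : ℂ) * deriv (fun y => (Real.sqrt (a y) : ℂ) * (u₁ y - u₂ y)) x,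
                    (a x : ℂ) * deriv (fun y => (Real.sqrt (b y) : ℂ) * (u₁ y + u₂ y)) x]
                = ![(Real.sqrt (a x * b x) : ℂ) * deriv u₁ x,
                    -(Real.sqrt (a x * b x) : ℂ) * deriv u₂ x]
                  + E x *ᵥ ![u₁ x, u₂ x] := by
  refine ⟨Real.sqrt Lam / Real.sqrt lam,
    div_pos (Real.sqrt_pos.mpr (hlam.trans_le hLL)) (Real.sqrt_pos.mpr hlam), ?_⟩
  intro a b ha hb hea heb
  have hLam : 0 < Lam := hlam.trans_le hLL
  have hal : ∀ x, lam ≤ a x := fun x => (hea x).1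
  have hbl : ∀ x, lam ≤ b x := fun x => (heb x).1
  have hsa_pos : ∀ x, 0 < Real.sqrt (a x) :=
    fun x => Real.sqrt_pos.mpr (hlam.trans_le (hal x))
  have hsb_pos : ∀ x, 0 < Real.sqrt (b x) :=
    fun x => Real.sqrt_pos.mpr (hlam.trans_le (hbl x))
  have hsaC : ∀ x, (Real.sqrt (a x) : ℂ) ≠ 0 :=
    fun x => Complex.ofReal_ne_zero.mpr (hsa_pos x).ne'
  have hsbC : ∀ x, (Real.sqrt (b x) : ℂ) ≠ 0 :=
    fun x => Complex.ofReal_ne_zero.mpr (hsb_pos x).ne'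
  constructor
  · intro x
    constructor <;>
    · ext i j
      fin_cases i <;> fin_cases j <;>
        simp [Mmat, Mmatinv, Matrix.mul_apply, Fin.sum_univ_two] <;>
        field_simp [hsaC x, hsbC x] <;>
        ring
  · have hlipa := sqrt_comp_lipschitz' hlam ha hal
    have hlipb := sqrt_comp_lipschitz' hlam hb hbl
    have hada : ∀ᵐ x : ℝ ∂volume, DifferentiableAt ℝ (fun y => Real.sqrt (a y)) x :=
      hlipa.ae_differentiableAt
    have hadb : ∀ᵐ x : ℝ ∂volume, DifferentiableAt ℝ (fun y => Real.sqrt (b y)) x :=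
      hlipb.ae_differentiableAt
    set da : ℝ → ℝ := deriv (fun y => Real.sqrt (a y)) with hda_def
    set db : ℝ → ℝ := deriv (fun y => Real.sqrt (b y)) with hdb_def
    refine ⟨fun x => !![
        (((Real.sqrt (b x) * da x + Real.sqrt (a x) * db x) / 2 : ℝ) : ℂ),
        (((Real.sqrt (a x) * db x - Real.sqrt (b x) * da x) / 2 : ℝ) : ℂ);
        (((Real.sqrt (b x) * da x - Real.sqrt (a x) * db x) / 2 : ℝ) : ℂ),
        (((-(Real.sqrt (b x) * da x) - Real.sqrt (a x) * db x) / 2 : ℝ) : ℂ)],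
      ?_, ?_, ?_⟩
    · -- measurability
      have hma : Measurable da := measurable_deriv _
      have hmb : Measurable db := measurable_deriv _
      have hmsa : Measurable fun x => Real.sqrt (a x) := hlipa.continuous.measurable
      have hmsb : Measurable fun x => Real.sqrt (b x) := hlipb.continuous.measurable
      intro i j
      fin_cases i <;> fin_cases j <;>
        · simp only [Fin.zero_eta, Fin.mk_one, Fin.isValue, Matrix.cons_val', Matrix.cons_val_zero,
            Matrix.cons_val_one, Matrix.head_cons, Matrix.empty_val', Matrix.cons_val_fin_one,
            Matrix.head_fin_const]
          exact Complex.measurable_ofReal.comp (by fun_prop)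
    · -- bound
      have h0a : 0 ≤ lipNorm a := lipNorm_nonneg' ha
      have h0b : 0 ≤ lipNorm b := lipNorm_nonneg' hb
      have hl : 0 < Real.sqrt lam := Real.sqrt_pos.mpr hlam
      set M : ℝ := max (lipNorm a) (lipNorm b) with hM_def
      have hM0 : 0 ≤ M := le_trans h0a (le_max_left _ _)
      filter_upwards [hada, hadb] with x hxa hxb
      have hdax : |da x| ≤ lipNorm a / (2 * Real.sqrt lam) := by
        have := deriv_le_of_lip' hlipa x hxa
        rwa [Real.coe_toNNReal _ (by positivity)] at this
      have hdbx : |db x| ≤ lipNorm b / (2 * Real.sqrt lam) := by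
        have := deriv_le_of_lip' hlipb x hxb
        rwa [Real.coe_toNNReal _ (by positivity)] at this
      have hdax' : |da x| ≤ M / (2 * Real.sqrt lam) :=
        hdax.trans (by gcongr; exact le_max_left _ _)
      have hdbx' : |db x| ≤ M / (2 * Real.sqrt lam) :=
        hdbx.trans (by gcongr; exact le_max_right _ _)
      have hsble : Real.sqrt (b x) ≤ Real.sqrt Lam := Real.sqrt_le_sqrt (heb x).2
      have hsale : Real.sqrt (a x) ≤ Real.sqrt Lam := Real.sqrt_le_sqrt (hea x).2
      have h1 : |Real.sqrt (b x) * da x| ≤ Real.sqrt Lam * (M / (2 * Real.sqrt lam)) := by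
        rw [abs_mul, abs_of_nonneg (Real.sqrt_nonneg _)]
        exact mul_le_mul hsble hdax' (abs_nonneg _) (Real.sqrt_nonneg _)
      have h2 : |Real.sqrt (a x) * db x| ≤ Real.sqrt Lam * (M / (2 * Real.sqrt lam)) := by
        rw [abs_mul, abs_of_nonneg (Real.sqrt_nonneg _)]
        exact mul_le_mul hsale hdbx' (abs_nonneg _) (Real.sqrt_nonneg _)
      have hCle : 2 * (Real.sqrt Lam * (M / (2 * Real.sqrt lam))) / 2
          ≤ Real.sqrt Lam / Real.sqrt lam * M := by
        have : 2 * (Real.sqrt Lam * (M / (2 * Real.sqrt lam))) / 2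
            = (Real.sqrt Lam / Real.sqrt lam * M) / 2 := by
          field_simp
        rw [this]
        exact half_le_self (by positivity)
      have hgen : ∀ r : ℝ, |r| ≤ 2 * (Real.sqrt Lam * (M / (2 * Real.sqrt lam))) →
          ‖((r / 2 : ℝ) : ℂ)‖ ≤ Real.sqrt Lam / Real.sqrt lam * M := by
        intro r hr
        rw [Complex.norm_real, Real.norm_eq_abs]
        refine le_trans ?_ hCle
        rw [abs_div, abs_two]
        linarith [hr]
      intro i j
      fin_cases i <;> fin_cases j
      · exact hgen _ ((abs_add_le _ _).trans (by linarith))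
      · exact hgen _ ((abs_sub _ _).trans (by linarith))
      · exact hgen _ ((abs_sub _ _).trans (by linarith))
      · refine hgen _ ?_
        rw [show -(Real.sqrt (b x) * da x) - Real.sqrt (a x) * db x
            = -(Real.sqrt (b x) * da x + Real.sqrt (a x) * db x) by ring, abs_neg]
        exact (abs_add_le _ _).trans (by linarith)
    · -- the identity
      intro u₁ u₂ hu1 hc1 hu2 hc2
      filter_upwards [hada, hadb] with x hxa hxb
      have hu1d : HasDerivAt u₁ (deriv u₁ x) x :=
        ((hu1.differentiable (by simp)) x).hasDerivAt
      have hu2d : HasDerivAt u₂ (deriv u₂ x) x :=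
        ((hu2.differentiable (by simp)) x).hasDerivAt
      have hca : HasDerivAt (fun y => (Real.sqrt (a y) : ℂ)) ((da x : ℂ)) x :=
        hxa.hasDerivAt.ofReal_comp
      have hcb : HasDerivAt (fun y => (Real.sqrt (b y) : ℂ)) ((db x : ℂ)) x :=
        hxb.hasDerivAt.ofReal_comp
      have d1 : deriv (fun y => (Real.sqrt (a y) : ℂ) * (u₁ y - u₂ y)) x
          = (da x : ℂ) * (u₁ x - u₂ x)
            + (Real.sqrt (a x) : ℂ) * (deriv u₁ x - deriv u₂ x) :=
        (hca.mul (hu1d.sub hu2d)).deriv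
      have d2 : deriv (fun y => (Real.sqrt (b y) : ℂ) * (u₁ y + u₂ y)) x
          = (db x : ℂ) * (u₁ x + u₂ x)
            + (Real.sqrt (b x) : ℂ) * (deriv u₁ x + deriv u₂ x) :=
        (hcb.mul (hu1d.add hu2d)).deriv
      have hsab : (Real.sqrt (a x * b x) : ℂ) = (Real.sqrt (a x) : ℂ) * (Real.sqrt (b x) : ℂ) := by
        rw [Real.sqrt_mul (hlam.le.trans (hal x))]
        push_cast
        ring
      have hsa2 : (Real.sqrt (a x) : ℂ) * (Real.sqrt (a x) : ℂ) = (a x : ℂ) := by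
        have h := Real.mul_self_sqrt (hlam.le.trans (hal x))
        exact_mod_cast congrArg Complex.ofReal h
      have hsb2 : (Real.sqrt (b x) : ℂ) * (Real.sqrt (b x) : ℂ) = (b x : ℂ) := by
        have h := Real.mul_self_sqrt (hlam.le.trans (hbl x))
        exact_mod_cast congrArg Complex.ofReal h
      funext i
      fin_cases i <;>
      · simp only [Mmatinv, Matrix.smul_mulVec, Matrix.mulVec, dotProduct,
          Fin.sum_univ_two, Fin.zero_eta, Fin.mk_one, Fin.isValue, Matrix.cons_val',
          Matrix.cons_val_zero, Matrix.cons_val_one, Matrix.head_cons, Matrix.empty_val',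
          Matrix.cons_val_fin_one, Matrix.head_fin_const, Pi.add_apply, Pi.smul_apply, Matrix.of_apply, Matrix.smul_apply,
          smul_eq_mul, d1, d2, hsab]
        rw [← hsa2, ← hsb2]
        field_simp [hsaC x, hsbC x]
        push_cast
        ring
end
end

section
/- Let a : ℝ → ℝ be continuous and (λ,Λ)-elliptic, φ(x) = ∫₀ˣ a(y)^{-1} dy, and χ(t,x) = φ^{-1}(t + φ(x)). Then for every f ∈ L¹(ℝ) and every x ∈ ℝ: ∫_ℝ |f(χ(t,x))| dt ≤ λ^{-1} ‖f‖_{L¹(ℝ)}. In particular the transport group T_t f(x) = f(χ(t,x)) satisfies sup_x ∫_ℝ |T_t f(x)| dt ≤ C(λ,Λ) ‖f‖_{L¹(ℝ)}. -/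
open MeasureTheory Real Set Filter
open scoped FourierTransform ENNReal NNReal

noncomputable section

/-- Time-integrated transport bound: for a continuous elliptic
coefficient `a`, `φ(x) = ∫₀ˣ a(y)⁻¹ dy`, `χ(t,x) = φ⁻¹(t + φ(x))`, and `f ∈ L¹(ℝ)`,
`∫_ℝ |f(χ(t,x))| dt ≤ λ⁻¹ ‖f‖_{L¹}` for every `x`; in particular the transport group
`T_t f(x) = f(χ(t,x))` satisfies `sup_x ∫_ℝ |T_t f(x)| dt ≤ C(λ,Λ) ‖f‖_{L¹}`. -/
theorem transport_time_integrated_bound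
    (lam Lam : ℝ) (hlam : 0 < lam) (hLL : lam ≤ Lam)
    (a : ℝ → ℝ) (hc : Continuous a) (hell : Elliptic lam Lam a)
    (φ : ℝ → ℝ) (hφ : ∀ x : ℝ, φ x = ∫ y in (0:ℝ)..x, (a y)⁻¹)
    (χ : ℝ → ℝ → ℝ) (hχ : ∀ t x : ℝ, χ t x = Function.invFun φ (t + φ x)) :
    ∀ f : ℝ → ℂ, Integrable f volume →
      (∀ x : ℝ,
        ∫⁻ t : ℝ, (‖f (χ t x)‖₊ : ℝ≥0∞)
          ≤ ENNReal.ofReal lam⁻¹ * ∫⁻ y : ℝ, (‖f y‖₊ : ℝ≥0∞))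
      ∧ (⨆ x : ℝ, ∫⁻ t : ℝ, (‖f (χ t x)‖₊ : ℝ≥0∞))
          ≤ ENNReal.ofReal lam⁻¹ * ∫⁻ y : ℝ, (‖f y‖₊ : ℝ≥0∞) := by
  intro f hf
  have hapos : ∀ y, 0 < a y := fun y => lt_of_lt_of_le hlam (hell y).1
  have hane : ∀ y, a y ≠ 0 := fun y => (hapos y).ne'
  have hainv_cont : Continuous fun y => (a y)⁻¹ := hc.inv₀ hane
  have hφderiv : ∀ x : ℝ, HasDerivAt φ ((a x)⁻¹) x := by
    intro x
    have h1 : HasDerivAt (fun u => ∫ y in (0:ℝ)..u, (a y)⁻¹) ((a x)⁻¹) x :=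
      intervalIntegral.integral_hasDerivAt_right
        (hainv_cont.intervalIntegrable _ _)
        (hainv_cont.stronglyMeasurableAtFilter _ _)
        hainv_cont.continuousAt
    exact h1.congr_of_eventuallyEq (by filter_upwards with u using (hφ u))
  have hφdiff : Differentiable ℝ φ := fun x => (hφderiv x).differentiableAt
  have hφcont : Continuous φ := hφdiff.continuous
  have hφmono : StrictMono φ :=
    strictMono_of_hasDerivAt_pos hφderiv (fun x => inv_pos.2 (hapos x))
  have hφinj : Function.Injective φ := hφmono.injective
  have hLam0 : (0:ℝ) < Lam := lt_of_lt_of_le hlam hLL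
  have hbound1 : ∀ x : ℝ, 0 ≤ x → Lam⁻¹ * x ≤ φ x := by
    intro x hx
    have h1 : ∫ _y in (0:ℝ)..x, Lam⁻¹ ≤ ∫ y in (0:ℝ)..x, (a y)⁻¹ := by
      apply intervalIntegral.integral_mono_on hx
        intervalIntegrable_const (hainv_cont.intervalIntegrable _ _)
      intro y _
      exact inv_anti₀ (hapos y) (hell y).2
    simpa [hφ x, mul_comm] using h1
  have hbound2 : ∀ x : ℝ, x ≤ 0 → φ x ≤ Lam⁻¹ * x := by
    intro x hx
    have h1 : ∫ _y in x..(0:ℝ), Lam⁻¹ ≤ ∫ y in x..(0:ℝ), (a y)⁻¹ := by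
      apply intervalIntegral.integral_mono_on hx
        intervalIntegrable_const (hainv_cont.intervalIntegrable _ _)
      intro y _
      exact inv_anti₀ (hapos y) (hell y).2
    have h2 : (∫ y in (0:ℝ)..x, (a y)⁻¹) ≤ ∫ _y in (0:ℝ)..x, Lam⁻¹ := by
      simp only [intervalIntegral.integral_symm x 0]
      linarith
    simpa [hφ x, mul_comm] using h2
  have hlinTop : Tendsto (fun x : ℝ => Lam⁻¹ * x) atTop atTop :=
    Tendsto.const_mul_atTop (inv_pos.2 hLam0) tendsto_id
  have hlinBot : Tendsto (fun x : ℝ => Lam⁻¹ * x) atBot atBot :=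
    Tendsto.const_mul_atBot (inv_pos.2 hLam0) tendsto_id
  have htop : Tendsto φ atTop atTop :=
    tendsto_atTop_mono'  atTop
      (by filter_upwards [eventually_ge_atTop (0:ℝ)] with x hx using hbound1 x hx) hlinTop
  have hbot : Tendsto φ atBot atBot :=
    tendsto_atBot_mono' atBot
      (by filter_upwards [eventually_le_atBot (0:ℝ)] with x hx using hbound2 x hx) hlinBot
  have hφsurj : Function.Surjective φ := hφcont.surjective htop hbot
  have hinvl : ∀ y : ℝ, Function.invFun φ (φ y) = y :=
    fun y => Function.leftInverse_invFun hφinj y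
  -- main bound
  have key : ∀ x : ℝ, ∫⁻ t : ℝ, (‖f (χ t x)‖₊ : ℝ≥0∞)
      ≤ ENNReal.ofReal lam⁻¹ * ∫⁻ y : ℝ, (‖f y‖₊ : ℝ≥0∞) := by
    intro x
    set h : ℝ → ℝ := fun y => φ y - φ x with hh
    have hhinj : Function.Injective h := fun y z hyz => hφinj (by simpa [hh] using hyz)
    have hhsurj : Function.Surjective h := by
      intro t
      obtain ⟨y, hy⟩ := hφsurj (t + φ x)
      exact ⟨y, by simp [hh, hy]⟩
    have hhderiv : ∀ y ∈ (univ : Set ℝ),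
        HasFDerivWithinAt h
          ((ContinuousLinearMap.smulRight (1 : ℝ →L[ℝ] ℝ) ((a y)⁻¹))) univ y := by
      intro y _
      exact (((hφderiv y).sub_const (φ x)).hasFDerivAt).hasFDerivWithinAt
    have himg : h '' univ = univ := by
      rw [image_univ]; exact hhsurj.range_eq
    have hχh : ∀ y : ℝ, χ (h y) x = y := by
      intro y
      rw [hχ]
      simp [hh, hinvl y]
    calc ∫⁻ t : ℝ, (‖f (χ t x)‖₊ : ℝ≥0∞)
        = ∫⁻ t in h '' univ, (‖f (χ t x)‖₊ : ℝ≥0∞) := by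
          rw [himg, setLIntegral_univ]
      _ = ∫⁻ y in (univ : Set ℝ),
            ENNReal.ofReal |((ContinuousLinearMap.smulRight (1 : ℝ →L[ℝ] ℝ) ((a y)⁻¹)).det)|
              * (‖f (χ (h y) x)‖₊ : ℝ≥0∞) := by
          exact lintegral_image_eq_lintegral_abs_det_fderiv_mul volume MeasurableSet.univ
            hhderiv (hhinj.injOn) _
      _ = ∫⁻ y : ℝ, ENNReal.ofReal ((a y)⁻¹) * (‖f y‖₊ : ℝ≥0∞) := by
          rw [setLIntegral_univ]
          apply lintegral_congr
          intro y
          rw [hχh y, ContinuousLinearMap.smulRight_one_eq_toSpanSingleton,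
            ContinuousLinearMap.det_toSpanSingleton,
            abs_of_pos (inv_pos.2 (hapos y))]
      _ ≤ ∫⁻ y : ℝ, ENNReal.ofReal lam⁻¹ * (‖f y‖₊ : ℝ≥0∞) := by
          apply lintegral_mono
          intro y
          exact mul_le_mul_left
            (ENNReal.ofReal_le_ofReal (inv_anti₀ hlam (hell y).1)) _
      _ = ENNReal.ofReal lam⁻¹ * ∫⁻ y : ℝ, (‖f y‖₊ : ℝ≥0∞) :=
          lintegral_const_mul' _ _ ENNReal.ofReal_ne_top
  exact ⟨key, iSup_le key⟩
end
end
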